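/- Let g ≥ 1 and let M ∈ Sp(2g,ℝ) satisfy τ(M)·M = I_{2g}. Then there exists h ∈ Sp(2g,ℝ) such that M = τ(h)·h⁻¹. (Equivalently, the first nonabelian cohomology H¹(⟨τ⟩, Sp(2g,ℝ)) is trivial, where the group ⟨τ⟩ of order two acts on Sp(2g,ℝ) by τ.) -/

import Mathlib

open Matrix

/-- The symplectic matrix `J_g = (0 I; -I 0)` over `ℝ`. -/
def Jmat (g : ℕ) : Matrix (Fin g ⊕ Fin g) (Fin g ⊕ Fin g) ℝ := fromBlocks 0 1 (-1) 0

/-- The matrix `I_* = (-I 0; 0 I)` over `ℝ`. -/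
def Istar (g : ℕ) : Matrix (Fin g ⊕ Fin g) (Fin g ⊕ Fin g) ℝ := fromBlocks (-1) 0 0 1

/-- The involution `τ(x) = I_* x I_*`. -/
def tauInv (g : ℕ) (x : Matrix (Fin g ⊕ Fin g) (Fin g ⊕ Fin g) ℝ) :
    Matrix (Fin g ⊕ Fin g) (Fin g ⊕ Fin g) ℝ := Istar g * x * Istar g

/-!
With `A = I_* M`, the cocycle condition says `A² = 1` and `M ∈ Sp(2g,ℝ)` says that `A` is
anti-symplectic, `Aᵀ J A = -J`. Hence `J⁻¹ Aᵀ J = -A`, so `tr A = 0` and both eigenspaces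
of the involution `A` have dimension `g`. In an eigenbasis `P` (so `A P = P I_*`) the Gram
matrix `Pᵀ J P` anticommutes with `I_*`, because the eigenspaces are Lagrangian; it is
therefore `(0 β; -βᵀ 0)`, and rescaling the `+1`-eigenvectors by `β⁻¹` makes `P` symplectic.
Such an `h` satisfies `M h = I_* h I_*`, i.e. `M = τ(h) h⁻¹`.
-/

open Module

theorem Matrix.exists_isUnit_mul_eq_mul_diagonal {R n : Type*} [CommRing R] [Fintype n]
    [DecidableEq n] (A : Matrix n n R) (d : n → R) (b : Basis n R (n → R))
    (hb : ∀ j, A *ᵥ b j = d j • b j) :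
    ∃ P : Matrix n n R, IsUnit P ∧ A * P = P * diagonal d := by
  have := (Pi.basisFun R n).invertibleToMatrix b
  refine ⟨(Pi.basisFun R n).toMatrix b, isUnit_of_invertible _, ?_⟩
  ext i j
  rw [mul_diagonal, mul_comm]
  simpa [Basis.toMatrix_apply, mulVec, dotProduct, mul_apply] using congrFun (hb j) i

open LinearMap in
theorem LinearMap.exists_basis_neg_one_one_of_mul_self_eq_one
    {K V ι κ : Type*} [Field K] [CharZero K] [AddCommGroup V] [Module K V]
    [FiniteDimensional K V] [Fintype ι] [Fintype κ] (f : V →ₗ[K] V) (hf : f * f = 1)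
    (hV : finrank K V = Fintype.card ι + Fintype.card κ)
    (htr : trace K V f = Fintype.card κ - Fintype.card ι) :
    ∃ b : Basis (ι ⊕ κ) K V, (∀ i, f (b (.inl i)) = -b (.inl i)) ∧
      ∀ j, f (b (.inr j)) = b (.inr j) := by
  set e : V →ₗ[K] V := (2⁻¹ : K) • (1 - f) with he_def
  have he : IsIdempotentElem e := by
    have : (1 - f) * (1 - f) = (2 : K) • (1 - f) := by
      rw [sub_mul, mul_sub, mul_sub, hf, two_smul]; simp only [one_mul, mul_one]; abel
    rw [IsIdempotentElem, he_def, smul_mul_smul_comm, this, smul_smul]; norm_num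
  have h_range : ∀ x ∈ range e, f x = -x := by
    rintro _ ⟨y, rfl⟩
    have : f (f y) = y := congrArg (· y) hf
    simp only [he_def, smul_apply, sub_apply, Module.End.one_apply, map_smul, map_sub, this]
    module
  have h_ker : ∀ x ∈ ker e, f x = x := by
    intro x hx
    have : (2⁻¹ : K) • (x - f x) = 0 := hx
    rw [smul_eq_zero, sub_eq_zero] at this
    exact (this.resolve_left (by norm_num)).symm
  have h_range_dim : finrank K (range e) = Fintype.card ι := by
    have h_trace := he.isProj_range.trace
    rw [he_def, map_smul, map_sub, trace_one, htr, hV, smul_eq_mul] at h_trace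
    have : (finrank K (range e) : K) = Fintype.card ι := by rw [← h_trace]; push_cast; ring
    exact_mod_cast this
  have h_ker_dim : finrank K (ker e) = Fintype.card κ := by
    have := Submodule.finrank_add_eq_of_isCompl he.isCompl
    omega
  let b₁ := (finBasisOfFinrankEq K _ h_range_dim).reindex (Fintype.equivFin ι).symm
  let b₂ := (finBasisOfFinrankEq K _ h_ker_dim).reindex (Fintype.equivFin κ).symm
  refine ⟨(b₁.prod b₂).map (Submodule.prodEquivOfIsCompl _ _ he.isCompl), fun i => ?_,
    fun j => ?_⟩
  · simpa using h_range _ (b₁ i).2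
  · simpa using h_ker _ (b₂ j).2

theorem Matrix.exists_isUnit_mul_eq_mul_fromBlocks_of_mul_self_eq_one
    {K ι κ : Type*} [Field K] [CharZero K] [Fintype ι] [Fintype κ] [DecidableEq ι]
    [DecidableEq κ] (A : Matrix (ι ⊕ κ) (ι ⊕ κ) K) (hA : A * A = 1)
    (htr : A.trace = Fintype.card κ - Fintype.card ι) :
    ∃ P, IsUnit P ∧ A * P = P * fromBlocks (-1) 0 0 1 := by
  obtain ⟨b, hb_neg, hb_pos⟩ :=
    A.toLin'.exists_basis_neg_one_one_of_mul_self_eq_one (ι := ι) (κ := κ)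
      (by rw [Module.End.mul_eq_comp, ← toLin'_mul, hA, toLin'_one]; rfl) (by simp)
      (by simpa using htr)
  rw [show fromBlocks (-1 : Matrix ι ι K) 0 0 1 = diagonal (Sum.elim (-1) 1) by
    rw [← fromBlocks_diagonal, Pi.neg_def, ← diagonal_neg]; rfl]
  refine A.exists_isUnit_mul_eq_mul_diagonal _ b ?_
  rintro (i | j)
  · simpa using hb_neg i
  · simpa using hb_pos j

theorem Matrix.trace_eq_zero_of_mul_self_eq_one_of_transpose_mul_mul_eq_neg {K n : Type*}
    [Field K] [CharZero K] [Fintype n] [DecidableEq n] {A J : Matrix n n K} (hJ : IsUnit J)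
    (hA : A * A = 1) (hAJ : Aᵀ * J * A = -J) : A.trace = 0 := by
  obtain ⟨u, rfl⟩ := hJ
  have hAJ' : Aᵀ * u = -(u * A) := by
    rw [← neg_mul, ← hAJ, mul_assoc (Aᵀ * u), hA, mul_one]
  refine self_eq_neg.mp ?_
  calc A.trace = (Aᵀ * u * (↑u⁻¹ : Matrix n n K)).trace := by
        rw [Units.mul_inv_cancel_right, trace_transpose]
    _ = -((↑u⁻¹ : Matrix n n K) * (u * A)).trace := by
        rw [hAJ', neg_mul, trace_neg, trace_mul_comm]
    _ = -A.trace := by rw [Units.inv_mul_cancel_left]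

theorem Matrix.isUnit_of_isUnit_fromBlocks_zero_zero {R n : Type*} [CommRing R] [Fintype n]
    [DecidableEq n] {B C : Matrix n n R} (h : IsUnit (fromBlocks 0 B C 0)) : IsUnit B := by
  obtain ⟨X, hX⟩ := h.exists_right_inv
  rw [← fromBlocks_toBlocks X, fromBlocks_multiply, ← fromBlocks_one, fromBlocks_inj] at hX
  exact IsUnit.of_mul_eq_one _ (by simpa using hX.1)

section Symplectic

variable {g : ℕ}

theorem Istar_mul_self : Istar g * Istar g = 1 := by
  simp [Istar, fromBlocks_multiply, ← fromBlocks_one]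

theorem transpose_Istar : (Istar g)ᵀ = Istar g := by
  simp [Istar, fromBlocks_transpose]

theorem Istar_mul_fromBlocks_mul_Istar (a b c d : Matrix (Fin g) (Fin g) ℝ) :
    Istar g * fromBlocks a b c d * Istar g = fromBlocks a (-b) (-c) d := by
  simp [Istar, fromBlocks_multiply]

theorem Istar_mul_Jmat_mul_Istar : Istar g * Jmat g * Istar g = -Jmat g := by
  simp [Jmat, Istar_mul_fromBlocks_mul_Istar, fromBlocks_neg]

theorem transpose_Jmat : (Jmat g)ᵀ = -Jmat g := by
  simp [Jmat, fromBlocks_transpose, fromBlocks_neg]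

theorem isUnit_Jmat : IsUnit (Jmat g) :=
  IsUnit.of_mul_eq_one (-Jmat g) <| by
    simp [Jmat, fromBlocks_multiply, fromBlocks_neg, ← fromBlocks_one]

theorem isUnit_of_transpose_mul_Jmat_mul_eq {h : Matrix (Fin g ⊕ Fin g) (Fin g ⊕ Fin g) ℝ}
    (hh : hᵀ * Jmat g * h = Jmat g) : IsUnit h :=
  isUnit_of_mul_isUnit_right (x := hᵀ * Jmat g) (by rw [hh]; exact isUnit_Jmat)

theorem eq_fromBlocks_zero_of_Istar_conj_eq_neg
    {K : Matrix (Fin g ⊕ Fin g) (Fin g ⊕ Fin g) ℝ} (hK : Istar g * K * Istar g = -K)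
    (hKT : Kᵀ = -K) : K = fromBlocks 0 K.toBlocks₁₂ (-K.toBlocks₁₂ᵀ) 0 := by
  obtain ⟨a, b, c, d, rfl⟩ : ∃ a b c d, K = fromBlocks a b c d :=
    ⟨_, _, _, _, (fromBlocks_toBlocks K).symm⟩
  rw [Istar_mul_fromBlocks_mul_Istar, fromBlocks_neg, fromBlocks_inj] at hK
  rw [fromBlocks_transpose, fromBlocks_neg, fromBlocks_inj] at hKT
  obtain ⟨ha, -, -, hd⟩ := hK
  obtain ⟨-, -, hbc, -⟩ := hKT
  have h_zero (x : Matrix (Fin g) (Fin g) ℝ) (hx : x = -x) : x = 0 := by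
    ext i j; rw [Matrix.zero_apply]; linarith [congrFun (congrFun hx i) j, neg_apply x i j]
  rw [h_zero a ha, h_zero d hd, toBlocks_fromBlocks₁₂, hbc, neg_neg]

theorem transpose_mul_fromBlocks_mul_eq_Jmat {β : Matrix (Fin g) (Fin g) ℝ} (hβ : IsUnit β) :
    (fromBlocks 1 0 0 β⁻¹)ᵀ * fromBlocks 0 β (-βᵀ) 0 * fromBlocks 1 0 0 β⁻¹ = Jmat g := by
  have hβ' : IsUnit β.det := (isUnit_iff_isUnit_det β).mp hβ
  have h_inv : (β⁻¹)ᵀ * βᵀ = 1 := by rw [← transpose_mul, mul_nonsing_inv _ hβ', transpose_one]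
  simp [fromBlocks_transpose, fromBlocks_multiply, Jmat, mul_nonsing_inv _ hβ', h_inv]

theorem commute_Istar_fromBlocks (a d : Matrix (Fin g) (Fin g) ℝ) :
    Commute (Istar g) (fromBlocks a 0 0 d) := by
  simp [Commute, SemiconjBy, Istar, fromBlocks_multiply]

theorem exists_symplectic_mul_eq_mul_Istar {A : Matrix (Fin g ⊕ Fin g) (Fin g ⊕ Fin g) ℝ}
    (hA : A * A = 1) (hAJ : Aᵀ * Jmat g * A = -Jmat g) :
    ∃ h, hᵀ * Jmat g * h = Jmat g ∧ A * h = h * Istar g := by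
  have htr := trace_eq_zero_of_mul_self_eq_one_of_transpose_mul_mul_eq_neg isUnit_Jmat hA hAJ
  obtain ⟨P, hP, hAP⟩ := A.exists_isUnit_mul_eq_mul_fromBlocks_of_mul_self_eq_one hA
    (by simp [htr])
  change A * P = P * Istar g at hAP
  set K := Pᵀ * Jmat g * P with hK_def
  have hK_conj : Istar g * K * Istar g = -K := by
    calc Istar g * K * Istar g = (P * Istar g)ᵀ * Jmat g * (P * Istar g) := by
          simp only [hK_def, transpose_mul, transpose_Istar, mul_assoc]
      _ = Pᵀ * (Aᵀ * Jmat g * A) * P := by simp only [← hAP, transpose_mul, mul_assoc]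
      _ = -K := by rw [hAJ, mul_neg, neg_mul]
  have hK_transpose : Kᵀ = -K := by
    simp only [hK_def, transpose_mul, transpose_transpose, transpose_Jmat, mul_assoc, neg_mul,
      mul_neg]
  have hK_unit : IsUnit K :=
    (((isUnit_transpose P).mpr hP).mul isUnit_Jmat).mul hP
  have hK_blocks := eq_fromBlocks_zero_of_Istar_conj_eq_neg hK_conj hK_transpose
  set β := K.toBlocks₁₂
  have hβ : IsUnit β := isUnit_of_isUnit_fromBlocks_zero_zero (hK_blocks ▸ hK_unit)
  refine ⟨P * fromBlocks 1 0 0 β⁻¹, ?_, ?_⟩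
  · calc (P * fromBlocks 1 0 0 β⁻¹)ᵀ * Jmat g * (P * fromBlocks 1 0 0 β⁻¹)
          = (fromBlocks 1 0 0 β⁻¹)ᵀ * K * fromBlocks 1 0 0 β⁻¹ := by
            simp only [hK_def, transpose_mul, mul_assoc]
      _ = Jmat g := by rw [hK_blocks]; exact transpose_mul_fromBlocks_mul_eq_Jmat hβ
  · rw [← mul_assoc, hAP, mul_assoc, (commute_Istar_fromBlocks _ _).eq, mul_assoc]

theorem stmt_19_general (g : ℕ)
    (M : Matrix (Fin g ⊕ Fin g) (Fin g ⊕ Fin g) ℝ)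
    (hM : Mᵀ * Jmat g * M = Jmat g)
    (hcoc : tauInv g M * M = 1) :
    ∃ h : Matrix (Fin g ⊕ Fin g) (Fin g ⊕ Fin g) ℝ,
      hᵀ * Jmat g * h = Jmat g ∧ M = tauInv g h * h⁻¹ := by
  have hA : (Istar g * M) * (Istar g * M) = 1 := by simpa only [tauInv, mul_assoc] using hcoc
  have hAJ : (Istar g * M)ᵀ * Jmat g * (Istar g * M) = -Jmat g := by
    calc (Istar g * M)ᵀ * Jmat g * (Istar g * M)
          = Mᵀ * (Istar g * Jmat g * Istar g) * M := by
            simp only [transpose_mul, transpose_Istar, mul_assoc]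
      _ = -Jmat g := by rw [Istar_mul_Jmat_mul_Istar, mul_neg, neg_mul, hM]
  obtain ⟨h, hh, hAh⟩ := exists_symplectic_mul_eq_mul_Istar hA hAJ
  have h_det : IsUnit h.det :=
    (isUnit_iff_isUnit_det h).mp (isUnit_of_transpose_mul_Jmat_mul_eq hh)
  refine ⟨h, hh, ?_⟩
  calc M = Istar g * (Istar g * M * h) * h⁻¹ := by
        rw [← mul_assoc, ← mul_assoc, Istar_mul_self, one_mul, mul_assoc,
          mul_nonsing_inv _ h_det, mul_one]
    _ = tauInv g h * h⁻¹ := by simp only [hAh, tauInv, mul_assoc]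

/-- `H¹(⟨τ⟩, Sp(2g,ℝ))` is trivial: every `M ∈ Sp(2g,ℝ)` with `τ(M)·M = I` can be
written `M = τ(h)·h⁻¹` for some `h ∈ Sp(2g,ℝ)`. -/
theorem stmt_19 (g : ℕ) (hg : 1 ≤ g)
    (M : Matrix (Fin g ⊕ Fin g) (Fin g ⊕ Fin g) ℝ)
    (hM : Mᵀ * Jmat g * M = Jmat g)
    (hcoc : tauInv g M * M = 1) :
    ∃ h : Matrix (Fin g ⊕ Fin g) (Fin g ⊕ Fin g) ℝ,
      hᵀ * Jmat g * h = Jmat g ∧ M = tauInv g h * h⁻¹ :=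
  stmt_19_general g M hM hcoc
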